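/- Let G be a group and R a retract of G, i.e. a subgroup of G such that there exists a homomorphism ρ : G → R restricting to the identity on R. Suppose that G is weakly hyperbolic relative to a collection of subgroups {A₁, …, Aₘ} with Aᵢ ≤ R for all i = 1, …, m. Then R is weakly hyperbolic relative to {A₁, …, Aₘ}. -/

import Mathlib

/-- The Cayley graph of a group `G` with respect to a set `S` of generators: two distinct
elements `a b : G` are adjacent iff they differ by right multiplication by an element of
`S` or the inverse of an element of `S`. -/
def cayleyGraph (G : Type*) [Group G] (S : Set G) : SimpleGraph G where
  Adj a b := a ≠ b ∧ (a⁻¹ * b ∈ S ∨ b⁻¹ * a ∈ S)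
  symm := by
    constructor
    rintro a b ⟨hne, h⟩
    exact ⟨hne.symm, h.symm⟩
  loopless := by constructor; rintro a ⟨hne, -⟩; exact hne rfl

/-- A walk in a graph is a (discrete) geodesic if its length equals the combinatorial
distance between its endpoints. -/
def SimpleGraph.IsGeodesic {V : Type*} (Γ : SimpleGraph V) {u v : V} (p : Γ.Walk u v) : Prop :=
  p.length = Γ.dist u v

/-- A graph is hyperbolic (as a geodesic metric space, with the combinatorial metric in
which every edge has length `1`) iff there is `δ ≥ 0` such that each side of every
geodesic triangle is contained in the closed `δ`-neighbourhood of the union of the other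
two sides. -/
def SimpleGraph.IsHyperbolic {V : Type*} (Γ : SimpleGraph V) : Prop :=
  ∃ δ : ℕ, ∀ (u v w : V) (p : Γ.Walk u v) (q : Γ.Walk v w) (r : Γ.Walk u w),
    Γ.IsGeodesic p → Γ.IsGeodesic q → Γ.IsGeodesic r →
    ∀ x ∈ r.support, ∃ y, (y ∈ p.support ∨ y ∈ q.support) ∧ Γ.dist x y ≤ δ

/-- `X ⊆ G` is a relative generating set of `G` with respect to the collection of
subgroups `H i`, i.e. `G` is generated by `X` together with all the `H i`. -/
def IsRelGenSet {G : Type*} [Group G] {ι : Type*} (H : ι → Subgroup G) (X : Set G) : Prop :=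
  Subgroup.closure (X ∪ ⋃ i, (H i : Set G)) = ⊤

/-- The relative Cayley graph of `G` with respect to the collection of subgroups `H i`
and the set `X`: the Cayley graph of `G` with respect to the generating set
`X ∪ ⋃ i, H i`. -/
def relCayleyGraph (G : Type*) [Group G] {ι : Type*} (H : ι → Subgroup G) (X : Set G) :
    SimpleGraph G :=
  cayleyGraph G (X ∪ ⋃ i, (H i : Set G))

/-- `G` is weakly hyperbolic relative to the collection of subgroups `H i` if there is a
finite relative generating set `X` of `G` with respect to the `H i` such that the
corresponding relative Cayley graph is hyperbolic. -/
def IsWeaklyRelativelyHyperbolic (G : Type*) [Group G] {ι : Type*} (H : ι → Subgroup G) :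
    Prop :=
  ∃ X : Set G, X.Finite ∧ IsRelGenSet H X ∧ (relCayleyGraph G H X).IsHyperbolic

/-!
The inclusion of `R` into `G` is a quasi-isometric embedding of relative Cayley graphs, with
`ρ(X)` as relative generating set of `R`: an edge of the Cayley graph of `R` is labelled by an
element of some `A i ⊆ G` or by one of finitely many elements `ρ x`, so it has bounded length
in the Cayley graph of `G`; conversely `ρ` maps edges to edges or points and fixes `R`, so it
does not shrink distances. By the Morse lemma, images of geodesics of `R` are then uniformly
close to geodesics of `G` with the same endpoints, so thin triangles of `G` give thin
triangles of `R`. The Morse lemma is proved as in Bridson–Haefliger (III.H.1.7), from the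
estimate that a geodesic lies in the `(δ log₂ ℓ + 1)`-neighbourhood of any path of length `ℓ`
with the same endpoints.
-/

lemma Nat.mul_add_le_two_pow {a b k : ℕ} (ha : 2 * a ≤ k) (hb : b ≤ k) : a * k + b ≤ 2 ^ k := by
  rcases Nat.eq_zero_or_pos a with rfl | ha₀
  · simpa using hb.trans (Nat.lt_two_pow_self).le
  · obtain ⟨t, rfl⟩ : ∃ t, k = a + 1 + t := ⟨k - a - 1, by omega⟩
    have e1 : a + 1 ≤ 2 ^ a := Nat.lt_two_pow_self
    have e2 : t + 1 ≤ 2 ^ t := Nat.lt_two_pow_self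
    rw [pow_add, pow_succ]
    nlinarith

lemma Nat.exists_le_add_and_le_add {g : ℕ → ℕ} {L t w : ℕ}
    (hstep : ∀ i < L, g (i + 1) ≤ g i + 2 * w) (h₀ : g 0 ≤ t) (hL : t ≤ g L) :
    ∃ i ≤ L, g i ≤ t + w ∧ t ≤ g i + w := by
  induction L with
  | zero => exact ⟨0, le_rfl, by omega, by omega⟩
  | succ L ih =>
    by_cases h : t ≤ g L
    · obtain ⟨i, hi, hti⟩ := ih (fun i hi => hstep i (by omega)) h
      exact ⟨i, by omega, hti⟩
    · have := hstep L (by omega)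
      by_cases h' : t ≤ g L + w
      · exact ⟨L, by omega, by omega, h'⟩
      · exact ⟨L + 1, le_rfl, by omega, by omega⟩

def morseConst (δ c : ℕ) : ℕ := δ * (32 * c * δ + 32 * c * c) + 2 * c

lemma le_morseConst_of_le_clog {δ c d : ℕ}
    (hd : d ≤ δ * Nat.clog 2 (8 * c * d) + 2 * c) : d ≤ morseConst δ c := by
  generalize hKdef : Nat.clog 2 (8 * c * d) = K at hd
  suffices hK : K ≤ 32 * c * δ + 32 * c * c by
    have := Nat.mul_le_mul_left δ hK
    unfold morseConst
    omega
  by_contra! hK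
  have h8 : 1 < 8 * c * d := by
    by_contra! h
    have : K = 0 := hKdef ▸ Nat.clog_of_right_le_one h 2
    omega
  have hpow : 2 ^ (K - 1) < 8 * c * d := hKdef ▸ Nat.pow_pred_clog_lt_self (by norm_num) h8
  have hK₁ : 2 ^ K = 2 ^ (K - 1) * 2 := by rw [← pow_succ]; congr 1; omega
  have hlt : 2 ^ K < (16 * c * δ) * K + 32 * c * c := by
    calc 2 ^ K < 8 * c * d * 2 := by omega
      _ ≤ 8 * c * (δ * K + 2 * c) * 2 := by gcongr
      _ = (16 * c * δ) * K + 32 * c * c := by ring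
  rw [show 32 * c * δ = 2 * (16 * c * δ) by ring] at hK
  exact hlt.not_ge (Nat.mul_add_le_two_pow (by omega) (by omega))

namespace SimpleGraph

variable {V : Type*} {Γ : SimpleGraph V} {u v w : V}

lemma Walk.dist_le_length_of_mem_support_left [DecidableEq V] (p : Γ.Walk u v)
    (h : w ∈ p.support) : Γ.dist u w ≤ p.length :=
  (dist_le _).trans (p.length_takeUntil_le_length h)

lemma Walk.dist_le_length_of_mem_support_right [DecidableEq V] (p : Γ.Walk u v)
    (h : w ∈ p.support) : Γ.dist w v ≤ p.length :=
  (dist_le _).trans (p.length_dropUntil_le_length h)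

def HasSlimTriangles (Γ : SimpleGraph V) (δ : ℕ) : Prop :=
  ∀ (u v w : V) (p : Γ.Walk u v) (q : Γ.Walk v w) (r : Γ.Walk u w),
    Γ.IsGeodesic p → Γ.IsGeodesic q → Γ.IsGeodesic r →
    ∀ x ∈ r.support, ∃ y, (y ∈ p.support ∨ y ∈ q.support) ∧ Γ.dist x y ≤ δ

lemma isHyperbolic_iff_exists_hasSlimTriangles :
    Γ.IsHyperbolic ↔ ∃ δ, Γ.HasSlimTriangles δ :=
  Iff.rfl

lemma IsGeodesic.of_isSubwalk {u' v' : V} {p : Γ.Walk u v} {q : Γ.Walk u' v'}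
    (hp : Γ.IsGeodesic p) (h : q.IsSubwalk p) : Γ.IsGeodesic q :=
  length_eq_dist_of_subwalk hp h

lemma IsGeodesic.dist_getVert {p : Γ.Walk u v} (hp : Γ.IsGeodesic p) {a b : ℕ} (hab : a ≤ b)
    (hb : b ≤ p.length) : Γ.dist (p.getVert a) (p.getVert b) = b - a := by
  have hsub := (p.drop a).isSubwalk_take (b - a) |>.trans (p.isSubwalk_drop a)
  have := hp.of_isSubwalk hsub
  rw [IsGeodesic, Walk.take_length, Walk.drop_length, Walk.drop_getVert,
    Nat.add_sub_cancel' hab] at this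
  omega

/-- A `(c, 0)`-quasi-geodesic sampled at the integer times `0, …, n`. -/
structure IsQuasiGeodesicChain (Γ : SimpleGraph V) (c n : ℕ) (x : ℕ → V) : Prop where
  dist_succ_le : ∀ j < n, Γ.dist (x j) (x (j + 1)) ≤ c
  sub_le_dist : ∀ j k, j ≤ k → k ≤ n → k - j ≤ Γ.dist (x j) (x k)

variable {c n : ℕ} {x : ℕ → V}

lemma exists_walk_of_dist_succ_le (hconn : Γ.Connected)
    (hstep : ∀ j < n, Γ.dist (x j) (x (j + 1)) ≤ c) {a b : ℕ} (hab : a ≤ b) (hb : b ≤ n) :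
    ∃ M : Γ.Walk (x a) (x b), M.length ≤ c * (b - a) ∧
      ∀ q ∈ M.support, ∃ s ≤ b, Γ.dist q (x s) ≤ c := by
  classical
  induction b, hab using Nat.le_induction with
  | base => exact ⟨.nil, by simp, fun q hq => ⟨a, le_rfl, by simp_all⟩⟩
  | succ b hab ih =>
    obtain ⟨M, hM, hMs⟩ := ih (by omega)
    obtain ⟨E, hE⟩ := hconn.exists_walk_length_eq_dist (x b) (x (b + 1))
    have hEc : E.length ≤ c := hE ▸ hstep b (by omega)
    refine ⟨M.append E, ?_, fun q hq => ?_⟩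
    · rw [Walk.length_append, Nat.sub_add_comm hab, mul_add_one]
      omega
    · rcases (Walk.mem_support_append_iff _ _).1 hq with hq | hq
      · obtain ⟨s, hs, hqs⟩ := hMs q hq
        exact ⟨s, by omega, hqs⟩
      · exact ⟨b + 1, le_rfl, (E.dist_le_length_of_mem_support_right hq).trans hEc⟩

lemma IsQuasiGeodesicChain.exists_walk (hconn : Γ.Connected) (hx : Γ.IsQuasiGeodesicChain c n x)
    {a b : ℕ} (ha : a ≤ n) (hb : b ≤ n) :
    ∃ M : Γ.Walk (x a) (x b), M.length ≤ c * Γ.dist (x a) (x b) ∧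
      ∀ q ∈ M.support, ∃ s ≤ n, Γ.dist q (x s) ≤ c := by
  wlog hab : a ≤ b generalizing a b
  · obtain ⟨M, hM, hMs⟩ := this hb ha (by omega)
    refine ⟨M.reverse, by rwa [Walk.length_reverse, dist_comm], fun q hq => hMs q ?_⟩
    rwa [Walk.support_reverse, List.mem_reverse] at hq
  obtain ⟨M, hM, hMs⟩ := exists_walk_of_dist_succ_le hconn hx.dist_succ_le hab hb
  refine ⟨M, hM.trans (Nat.mul_le_mul_left c (hx.sub_le_dist a b hab hb)), fun q hq => ?_⟩
  obtain ⟨s, hs, hqs⟩ := hMs q hq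
  exact ⟨s, hs.trans hb, hqs⟩

lemma IsQuasiGeodesicChain.dist_le (hconn : Γ.Connected) (hx : Γ.IsQuasiGeodesicChain c n x)
    {a b : ℕ} (hab : a ≤ b) (hb : b ≤ n) : Γ.dist (x a) (x b) ≤ c * (b - a) := by
  obtain ⟨M, hM, -⟩ := exists_walk_of_dist_succ_le hconn hx.dist_succ_le hab hb
  exact (Γ.dist_le M).trans hM

lemma IsQuasiGeodesicChain.sub_le_of_adj (hconn : Γ.Connected)
    (hx : Γ.IsQuasiGeodesicChain c n x) {j k : ℕ} (hjk : j ≤ k) (hk : k ≤ n) {y z : V}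
    (h : Γ.Adj y z) : k - j ≤ Γ.dist y (x j) + 1 + Γ.dist z (x k) := by
  have := hx.sub_le_dist j k hjk hk
  have := hconn.dist_triangle (u := x j) (v := y) (w := x k)
  have := hconn.dist_triangle (u := y) (v := z) (w := x k)
  have : Γ.dist (x j) y = Γ.dist y (x j) := dist_comm
  have : Γ.dist y z = 1 := dist_eq_one_iff_adj.2 h
  omega

lemma exists_nearest_index (Γ : SimpleGraph V) (x : ℕ → V) (n : ℕ) (p : V) :
    ∃ j ≤ n, ∀ k ≤ n, Γ.dist p (x j) ≤ Γ.dist p (x k) := by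
  obtain ⟨j, hj, hmin⟩ := (Finset.range (n + 1)).exists_min_image (fun j => Γ.dist p (x j))
    ⟨0, by simp⟩
  exact ⟨j, by simpa [Nat.lt_succ_iff] using hj,
    fun k hk => hmin k (by simpa [Nat.lt_succ_iff] using hk)⟩

variable {δ : ℕ}

lemma HasSlimTriangles.exists_mem_support_dist_le_of_length_le_two_pow (hconn : Γ.Connected)
    (hδ : Γ.HasSlimTriangles δ) (k : ℕ) {u v : V} (W : Γ.Walk u v) (hW : W.length ≤ 2 ^ k)
    {γ : Γ.Walk u v} (hγ : Γ.IsGeodesic γ) {p : V} (hp : p ∈ γ.support) :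
    ∃ q ∈ W.support, Γ.dist p q ≤ δ * k + 1 := by
  classical
  induction k generalizing u v p with
  | zero =>
    refine ⟨u, W.start_mem_support, ?_⟩
    calc Γ.dist p u = Γ.dist u p := dist_comm
      _ ≤ γ.length := γ.dist_le_length_of_mem_support_left hp
      _ ≤ W.length := hγ ▸ Γ.dist_le W
      _ ≤ δ * 0 + 1 := by simpa using hW
  | succ k ih =>
    set m := W.length / 2
    obtain ⟨γ₁, hγ₁⟩ := hconn.exists_walk_length_eq_dist u (W.getVert m)
    obtain ⟨γ₂, hγ₂⟩ := hconn.exists_walk_length_eq_dist (W.getVert m) v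
    obtain ⟨y, hy, hpy⟩ := hδ _ _ _ γ₁ γ₂ γ hγ₁ hγ₂ hγ p hp
    suffices ∃ q ∈ W.support, Γ.dist y q ≤ δ * k + 1 by
      obtain ⟨q, hq, hyq⟩ := this
      refine ⟨q, hq, (hconn.dist_triangle (v := y)).trans ?_⟩
      rw [mul_add_one]
      omega
    have hpow : 2 ^ (k + 1) = 2 ^ k + 2 ^ k := by ring
    rcases hy with hy | hy
    · obtain ⟨q, hq, hyq⟩ := ih (W.take m) (by simp; omega) hγ₁ hy
      exact ⟨q, (W.isSubwalk_take m).support_subset hq, hyq⟩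
    · obtain ⟨q, hq, hyq⟩ := ih (W.drop m) (by simp; omega) hγ₂ hy
      exact ⟨q, (W.isSubwalk_drop m).support_subset hq, hyq⟩

lemma IsGeodesic.exists_isGeodesic_getVert {p : Γ.Walk u v} (hp : Γ.IsGeodesic p) {a b : ℕ}
    (hab : a ≤ b) :
    ∃ q : Γ.Walk (p.getVert a) (p.getVert b), Γ.IsGeodesic q ∧
      ∀ i, a ≤ i → i ≤ b → p.getVert i ∈ q.support := by
  have hend : (p.drop a).getVert (b - a) = p.getVert b := by
    rw [Walk.drop_getVert, Nat.add_sub_cancel' hab]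
  refine ⟨((p.drop a).take (b - a)).copy rfl hend, ?_, fun i hai hib => ?_⟩
  · have := hp.of_isSubwalk ((p.drop a).isSubwalk_take (b - a) |>.trans (p.isSubwalk_drop a))
    simpa [IsGeodesic, hend] using this
  · have : p.getVert i = ((p.drop a).take (b - a)).getVert (i - a) := by
      rw [Walk.take_getVert, Walk.drop_getVert, min_eq_right (by omega), Nat.add_sub_cancel' hai]
    rw [Walk.support_copy, this]
    exact Walk.getVert_mem_support _ _

lemma IsQuasiGeodesicChain.exists_walk_avoiding (hconn : Γ.Connected) (hc : 1 ≤ c)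
    (hx : Γ.IsQuasiGeodesicChain c n x) {p y z : V} {d j₁ j₂ : ℕ} (hj₁ : j₁ ≤ n) (hj₂ : j₂ ≤ n)
    (hfar : ∀ j ≤ n, d ≤ Γ.dist p (x j)) (hy : d + Γ.dist y (x j₁) ≤ Γ.dist p y)
    (hz : d + Γ.dist z (x j₂) ≤ Γ.dist p z) (hpy : Γ.dist p y ≤ 2 * d)
    (hpz : Γ.dist p z ≤ 2 * d) :
    ∃ W : Γ.Walk y z, W.length ≤ 8 * c * d ∧ ∀ q ∈ W.support, d ≤ Γ.dist p q + c := by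
  classical
  obtain ⟨W₁, hW₁⟩ := hconn.exists_walk_length_eq_dist y (x j₁)
  obtain ⟨M, hM, hMs⟩ := hx.exists_walk hconn hj₁ hj₂
  obtain ⟨W₂, hW₂⟩ := hconn.exists_walk_length_eq_dist (x j₂) z
  rw [dist_comm] at hW₂
  have hj₁₂ : Γ.dist (x j₁) (x j₂) ≤ 6 * d := by
    have := hconn.dist_triangle (u := x j₁) (v := y) (w := x j₂)
    have := hconn.dist_triangle (u := y) (v := z) (w := x j₂)
    have := hconn.dist_triangle (u := y) (v := p) (w := z)
    have : Γ.dist (x j₁) y = Γ.dist y (x j₁) := dist_comm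
    have : Γ.dist y p = Γ.dist p y := dist_comm
    omega
  refine ⟨W₁.append (M.append W₂), ?_, fun q hq => ?_⟩
  · have := Nat.mul_le_mul_left c hj₁₂
    simp only [Walk.length_append]
    nlinarith
  simp only [Walk.mem_support_append_iff] at hq
  rcases hq with hq | hq | hq
  · have := W₁.dist_le_length_of_mem_support_left hq
    have := hconn.dist_triangle (u := p) (v := q) (w := y)
    rw [dist_comm (u := q)] at this
    omega
  · obtain ⟨s, hs, hqs⟩ := hMs q hq
    have := hconn.dist_triangle (u := p) (v := q) (w := x s)
    have := hfar s hs
    omega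
  · have := W₂.dist_le_length_of_mem_support_right hq
    have := hconn.dist_triangle (u := p) (v := q) (w := z)
    omega

/-- If `p ∈ γ` is at distance at least `d` from the chain while all of `γ` is `d`-close to it, the
segment of `γ` of radius `2d` around `p` can be bypassed through the chain by a walk of length at
most `8cd` staying `(d - c)`-far from `p`; the logarithmic divergence estimate then bounds `d`. -/
lemma IsQuasiGeodesicChain.le_morseConst (hconn : Γ.Connected) (hδ : Γ.HasSlimTriangles δ)
    (hc : 1 ≤ c) (hx : Γ.IsQuasiGeodesicChain c n x) {γ : Γ.Walk (x 0) (x n)}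
    (hγ : Γ.IsGeodesic γ) {p : V} {d : ℕ} (hp : p ∈ γ.support)
    (hfar : ∀ j ≤ n, d ≤ Γ.dist p (x j)) (hnear : ∀ q ∈ γ.support, ∃ j ≤ n, Γ.dist q (x j) ≤ d) :
    d ≤ morseConst δ c := by
  obtain ⟨i, rfl, hi⟩ := Walk.mem_support_iff_exists_getVert.1 hp
  have hend : ∀ y ∈ γ.support, (2 * d ≤ Γ.dist (γ.getVert i) y ∨ y = x 0 ∨ y = x n) →
      ∃ j ≤ n, d + Γ.dist y (x j) ≤ Γ.dist (γ.getVert i) y := by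
    rintro y hy (h | rfl | rfl)
    · obtain ⟨j, hj, hyj⟩ := hnear y hy
      exact ⟨j, hj, by omega⟩
    · exact ⟨0, Nat.zero_le _, by simpa using hfar 0 (Nat.zero_le _)⟩
    · exact ⟨n, le_rfl, by simpa using hfar n le_rfl⟩
  set a := i - 2 * d
  set b := min (i + 2 * d) γ.length
  have hpy : Γ.dist (γ.getVert i) (γ.getVert a) = i - a := by
    rw [dist_comm, hγ.dist_getVert (by omega) hi]
  have hpz : Γ.dist (γ.getVert i) (γ.getVert b) = b - i := hγ.dist_getVert (by omega) (by omega)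
  obtain ⟨j₁, hj₁, hy⟩ := hend _ (γ.getVert_mem_support a) <| by
    rcases le_or_gt (2 * d) i with h | h
    · exact .inl (by omega)
    · exact .inr (.inl (by rw [show a = 0 by omega, Walk.getVert_zero]))
  obtain ⟨j₂, hj₂, hz⟩ := hend _ (γ.getVert_mem_support b) <| by
    rcases le_or_gt (i + 2 * d) γ.length with h | h
    · exact .inl (by omega)
    · exact .inr (.inr (by rw [show b = γ.length by omega, Walk.getVert_length]))
  obtain ⟨W, hW, hWfar⟩ :=
    hx.exists_walk_avoiding hconn hc hj₁ hj₂ hfar hy hz (by omega) (by omega)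
  obtain ⟨γ', hγ', hmem⟩ := hγ.exists_isGeodesic_getVert (show a ≤ b by omega)
  obtain ⟨q, hq, hpq⟩ := hδ.exists_mem_support_dist_le_of_length_le_two_pow hconn _ W
    (hW.trans (Nat.le_pow_clog (by norm_num) _)) hγ' (hmem i (by omega) (by omega))
  have := hWfar q hq
  exact le_morseConst_of_le_clog (by omega)

theorem IsQuasiGeodesicChain.exists_dist_le_of_mem_support (hconn : Γ.Connected)
    (hδ : Γ.HasSlimTriangles δ) (hc : 1 ≤ c) (hx : Γ.IsQuasiGeodesicChain c n x)
    {γ : Γ.Walk (x 0) (x n)} (hγ : Γ.IsGeodesic γ) {p : V} (hp : p ∈ γ.support) :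
    ∃ j ≤ n, Γ.dist p (x j) ≤ morseConst δ c := by
  classical
  choose g hgn hg using Γ.exists_nearest_index x n
  obtain ⟨pm, hpm, hmax⟩ := γ.support.toFinset.exists_max_image (fun q => Γ.dist q (x (g q)))
    ⟨p, List.mem_toFinset.2 hp⟩
  have hd := hx.le_morseConst hconn hδ hc hγ (List.mem_toFinset.1 hpm) (hg pm)
    fun q hq => ⟨g q, hgn q, hmax q (List.mem_toFinset.2 hq)⟩
  exact ⟨g p, hgn p, (hmax p (List.mem_toFinset.2 hp)).trans hd⟩

def morseConst' (δ c : ℕ) : ℕ := c * (morseConst δ c + 1) + morseConst δ c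

theorem IsQuasiGeodesicChain.exists_mem_support_dist_le (hconn : Γ.Connected)
    (hδ : Γ.HasSlimTriangles δ) (hc : 1 ≤ c) (hx : Γ.IsQuasiGeodesicChain c n x)
    {γ : Γ.Walk (x 0) (x n)} (hγ : Γ.IsGeodesic γ) {t : ℕ} (ht : t ≤ n) :
    ∃ q ∈ γ.support, Γ.dist (x t) q ≤ morseConst' δ c := by
  set D := morseConst δ c
  choose g hgn hg using fun i => Γ.exists_nearest_index x n (γ.getVert i)
  have hgD : ∀ i, Γ.dist (γ.getVert i) (x (g i)) ≤ D := fun i => by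
    obtain ⟨j, hj, hd⟩ :=
      hx.exists_dist_le_of_mem_support hconn hδ hc hγ (γ.getVert_mem_support i)
    exact (hg i j hj).trans hd
  have hg₀ : g 0 = 0 := by
    have h := hg 0 0 (Nat.zero_le n)
    rw [Walk.getVert_zero, dist_self] at h
    have := hx.sub_le_dist 0 (g 0) (Nat.zero_le _) (hgn 0)
    omega
  have hgL : g γ.length = n := by
    have h := hg γ.length n le_rfl
    rw [Walk.getVert_length, dist_self, dist_comm] at h
    have := hx.sub_le_dist (g γ.length) n (hgn _) le_rfl
    have := hgn γ.length
    omega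
  have hstep : ∀ i < γ.length, g (i + 1) ≤ g i + 2 * (D + 1) := by
    intro i hi
    rcases le_or_gt (g i) (g (i + 1)) with h | h
    · have := hx.sub_le_of_adj hconn h (hgn _) (γ.adj_getVert_succ hi)
      have := hgD i
      have := hgD (i + 1)
      omega
    · omega
  obtain ⟨i, -, hi⟩ :=
    Nat.exists_le_add_and_le_add (L := γ.length) (t := t) hstep (by omega) (by omega)
  refine ⟨γ.getVert i, γ.getVert_mem_support i, ?_⟩
  have hti : Γ.dist (x t) (x (g i)) ≤ c * (D + 1) := by
    rcases le_total t (g i) with h | h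
    · exact (hx.dist_le hconn h (hgn i)).trans (Nat.mul_le_mul_left c (by omega))
    · rw [dist_comm]
      exact (hx.dist_le hconn h ht).trans (Nat.mul_le_mul_left c (by omega))
  have := hconn.dist_triangle (u := x t) (v := x (g i)) (w := γ.getVert i)
  have : Γ.dist (x (g i)) (γ.getVert i) = Γ.dist (γ.getVert i) (x (g i)) := dist_comm
  have := hgD i
  show _ ≤ c * (D + 1) + D
  omega

section QuasiIsometricEmbedding

variable {U : Type*} {Λ : SimpleGraph U} {f : U → V} {a b : U}

lemma Connected.dist_le_mul_length (hconn : Γ.Connected)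
    (hf : ∀ a b, Λ.Adj a b → Γ.dist (f a) (f b) ≤ c) (p : Λ.Walk a b) :
    Γ.dist (f a) (f b) ≤ c * p.length := by
  induction p with
  | nil => simp
  | @cons a a' b h p ih =>
    have := hconn.dist_triangle (u := f a) (v := f a') (w := f b)
    have := hf _ _ h
    rw [Walk.length_cons, mul_add_one]
    omega

lemma IsGeodesic.isQuasiGeodesicChain_comp (hadj : ∀ a b, Λ.Adj a b → Γ.dist (f a) (f b) ≤ c)
    (hlow : ∀ a b, Λ.dist a b ≤ Γ.dist (f a) (f b)) {s : Λ.Walk a b} (hs : Λ.IsGeodesic s) :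
    Γ.IsQuasiGeodesicChain c s.length (f ∘ s.getVert) where
  dist_succ_le _ hj := hadj _ _ (s.adj_getVert_succ hj)
  sub_le_dist _ _ hjk hk := (hs.dist_getVert hjk hk).symm.le.trans (hlow _ _)

lemma exists_mem_support_dist_comp_le_morseConst (hconn : Γ.Connected)
    (hδ : Γ.HasSlimTriangles δ) (hc : 1 ≤ c)
    (hadj : ∀ a b, Λ.Adj a b → Γ.dist (f a) (f b) ≤ c)
    (hlow : ∀ a b, Λ.dist a b ≤ Γ.dist (f a) (f b)) {s : Λ.Walk a b} (hs : Λ.IsGeodesic s)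
    {S : Γ.Walk (f a) (f b)} (hS : Γ.IsGeodesic S) {y : V} (hy : y ∈ S.support) :
    ∃ z ∈ s.support, Γ.dist y (f z) ≤ morseConst δ c := by
  obtain ⟨j, -, hj⟩ := (hs.isQuasiGeodesicChain_comp hadj hlow).exists_dist_le_of_mem_support
    hconn hδ hc (γ := S.copy (by simp) (by simp)) (by simpa [IsGeodesic] using hS)
    (by simpa using hy)
  exact ⟨s.getVert j, s.getVert_mem_support j, hj⟩

lemma exists_mem_support_dist_le_morseConst' (hconn : Γ.Connected)
    (hδ : Γ.HasSlimTriangles δ) (hc : 1 ≤ c)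
    (hadj : ∀ a b, Λ.Adj a b → Γ.dist (f a) (f b) ≤ c)
    (hlow : ∀ a b, Λ.dist a b ≤ Γ.dist (f a) (f b)) {s : Λ.Walk a b} (hs : Λ.IsGeodesic s)
    {S : Γ.Walk (f a) (f b)} (hS : Γ.IsGeodesic S) {z : U} (hz : z ∈ s.support) :
    ∃ y ∈ S.support, Γ.dist (f z) y ≤ morseConst' δ c := by
  obtain ⟨t, rfl, ht⟩ := Walk.mem_support_iff_exists_getVert.1 hz
  obtain ⟨y, hy, hty⟩ := (hs.isQuasiGeodesicChain_comp hadj hlow).exists_mem_support_dist_le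
    hconn hδ hc (γ := S.copy (by simp) (by simp)) (by simpa [IsGeodesic] using hS) ht
  exact ⟨y, by simpa using hy, hty⟩

theorem IsHyperbolic.of_dist_le (hconn : Γ.Connected) (hΓ : Γ.IsHyperbolic) (f : U → V) (c : ℕ)
    (hadj : ∀ a b, Λ.Adj a b → Γ.dist (f a) (f b) ≤ c)
    (hlow : ∀ a b, Λ.dist a b ≤ Γ.dist (f a) (f b)) : Λ.IsHyperbolic := by
  obtain ⟨δ, hδ⟩ := isHyperbolic_iff_exists_hasSlimTriangles.1 hΓ
  have hadj' a b (h : Λ.Adj a b) : Γ.dist (f a) (f b) ≤ c + 1 := (hadj a b h).trans c.le_succ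
  refine isHyperbolic_iff_exists_hasSlimTriangles.2 ⟨morseConst' δ (c + 1) + δ +
    morseConst δ (c + 1), fun u v w p q r hp hq hr x hx => ?_⟩
  obtain ⟨P, hP⟩ := hconn.exists_walk_length_eq_dist (f u) (f v)
  obtain ⟨Q, hQ⟩ := hconn.exists_walk_length_eq_dist (f v) (f w)
  obtain ⟨R, hR⟩ := hconn.exists_walk_length_eq_dist (f u) (f w)
  obtain ⟨y, hy, hxy⟩ :=
    exists_mem_support_dist_le_morseConst' hconn hδ (by omega) hadj' hlow hr hR hx
  obtain ⟨y', hy', hyy'⟩ := hδ _ _ _ P Q R hP hQ hR y hy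
  have close {a b} {s : Λ.Walk a b} (hs : Λ.IsGeodesic s) {S : Γ.Walk (f a) (f b)}
      (hS : Γ.IsGeodesic S) (hy' : y' ∈ S.support) :
      ∃ z ∈ s.support, Λ.dist x z ≤ morseConst' δ (c + 1) + δ + morseConst δ (c + 1) := by
    obtain ⟨z, hz, hyz⟩ :=
      exists_mem_support_dist_comp_le_morseConst hconn hδ (by omega) hadj' hlow hs hS hy'
    refine ⟨z, hz, (hlow x z).trans ?_⟩
    have := hconn.dist_triangle (u := f x) (v := y) (w := f z)
    have := hconn.dist_triangle (u := y) (v := y') (w := f z)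
    omega
  rcases hy' with hy' | hy'
  · obtain ⟨z, hz, hxz⟩ := close hp hP hy'
    exact ⟨z, .inl hz, hxz⟩
  · obtain ⟨z, hz, hxz⟩ := close hq hQ hy'
    exact ⟨z, .inr hz, hxz⟩

end QuasiIsometricEmbedding

end SimpleGraph

section Cayley

open SimpleGraph

variable {G H : Type*} [Group G] [Group H] {S : Set G} {T : Set H} {a b : G}

@[simps]
def cayleyGraph.mulLeft (S : Set G) (g : G) : cayleyGraph G S →g cayleyGraph G S where
  toFun := (g * ·)
  map_rel' := fun ⟨hne, h⟩ => ⟨by simpa using hne, by simpa [mul_assoc] using h⟩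

lemma cayleyGraph_connected (hS : Subgroup.closure S = ⊤) : (cayleyGraph G S).Connected := by
  have hreach (g : G) : (cayleyGraph G S).Reachable 1 g := by
    induction (hS ▸ Subgroup.mem_top g : g ∈ Subgroup.closure S) using
      Subgroup.closure_induction with
    | mem s hs =>
      by_cases h : s = 1
      · exact h ▸ .refl _
      · exact Adj.reachable ⟨Ne.symm h, .inl (by simpa using hs)⟩
    | one => exact .refl _
    | mul a b _ _ ha hb => exact ha.trans (by simpa using hb.map (cayleyGraph.mulLeft S a))
    | inv a _ ha =>
      have := ha.map (cayleyGraph.mulLeft S a⁻¹)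
      simp only [cayleyGraph.mulLeft_apply, mul_one, inv_mul_cancel] at this
      exact this.symm
  exact { preconnected := fun g h => (hreach g).symm.trans (hreach h) }

lemma cayleyGraph_dist_le_one (h : a⁻¹ * b ∈ S) : (cayleyGraph G S).dist a b ≤ 1 := by
  by_cases hab : a = b
  · simp [hab]
  · exact ((dist_eq_one_iff_adj (G := cayleyGraph G S)).2 ⟨hab, .inl h⟩).le

lemma cayleyGraph_dist_mul_left_le (hconn : (cayleyGraph G S).Connected) (g : G) :
    (cayleyGraph G S).dist (g * a) (g * b) ≤ (cayleyGraph G S).dist a b := by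
  obtain ⟨p, hp⟩ := hconn.exists_walk_length_eq_dist a b
  exact hp ▸ (dist_le (p.map (cayleyGraph.mulLeft S g))).trans_eq (Walk.length_map _ _)

lemma cayleyGraph_dist_map_le_of_adj (hconn : (cayleyGraph H T).Connected) (φ : G →* H)
    {c : ℕ} (hS : ∀ s ∈ S, (cayleyGraph H T).dist 1 (φ s) ≤ c)
    (h : (cayleyGraph G S).Adj a b) : (cayleyGraph H T).dist (φ a) (φ b) ≤ c := by
  wlog hab : a⁻¹ * b ∈ S generalizing a b
  · rw [dist_comm]
    exact this h.symm (h.2.resolve_left hab)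
  calc (cayleyGraph H T).dist (φ a) (φ b)
      = (cayleyGraph H T).dist (φ a * 1) (φ a * φ (a⁻¹ * b)) := by simp
    _ ≤ c := (cayleyGraph_dist_mul_left_le hconn _).trans (hS _ hab)

lemma cayleyGraph_dist_map_le (hconnS : (cayleyGraph G S).Connected)
    (hconnT : (cayleyGraph H T).Connected) (φ : G →* H) (hφ : Set.MapsTo φ S T) (a b : G) :
    (cayleyGraph H T).dist (φ a) (φ b) ≤ (cayleyGraph G S).dist a b := by
  obtain ⟨p, hp⟩ := hconnS.exists_walk_length_eq_dist a b
  have := hconnT.dist_le_mul_length (c := 1) (f := φ) (fun _ _ =>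
    cayleyGraph_dist_map_le_of_adj hconnT φ fun s hs =>
      cayleyGraph_dist_le_one (by simpa using hφ hs)) p
  rwa [one_mul, hp] at this

end Cayley

section Retract

variable {G : Type*} [Group G] {R : Subgroup G} (ρ : G →* R) {ι : Type*} {A : ι → Subgroup G}

lemma mapsTo_retraction (hρ : ∀ r : G, r ∈ R → (ρ r : G) = r) (hA : ∀ i, A i ≤ R) (X : Set G) :
    Set.MapsTo ρ (X ∪ ⋃ i, (A i : Set G)) (ρ '' X ∪ ⋃ i, ((A i).subgroupOf R : Set R)) := by
  rintro g (hg | hg)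
  · exact .inl ⟨g, hg, rfl⟩
  · obtain ⟨i, hi⟩ := Set.mem_iUnion.1 hg
    refine .inr (Set.mem_iUnion.2 ⟨i, ?_⟩)
    rwa [SetLike.mem_coe, Subgroup.mem_subgroupOf, hρ g (hA i hi)]

lemma IsRelGenSet.image_retraction {X : Set G} (hX : IsRelGenSet A X)
    (hρ : ∀ r : G, r ∈ R → (ρ r : G) = r) (hA : ∀ i, A i ≤ R) :
    IsRelGenSet (fun i => (A i).subgroupOf R) (ρ '' X) := by
  refine eq_top_iff.2 fun r _ => ?_
  have : ρ r ∈ (Subgroup.closure (X ∪ ⋃ i, (A i : Set G))).map ρ :=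
    Subgroup.mem_map_of_mem ρ (hX ▸ Subgroup.mem_top _)
  rw [show ρ r = r from Subtype.ext (hρ r r.2), MonoidHom.map_closure] at this
  exact Subgroup.closure_mono (mapsTo_retraction ρ hρ hA X).image_subset this

end Retract

/-- **Lemma (Osin, Lemma 3.3).** Let `G` be a group and `R` a retract of `G`. If `G` is
weakly hyperbolic relative to a collection of subgroups `A 0, …, A (m-1)` with `A i ≤ R`
for all `i`, then `R` is weakly hyperbolic relative to this collection. -/
theorem retract_weakly_relatively_hyperbolic {G : Type*} [Group G] (R : Subgroup G)
    (ρ : G →* R) (hρ : ∀ r : G, r ∈ R → (ρ r : G) = r)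
    {m : ℕ} (A : Fin m → Subgroup G) (hA : ∀ i, A i ≤ R)
    (hG : IsWeaklyRelativelyHyperbolic G A) :
    IsWeaklyRelativelyHyperbolic R (fun i => (A i).subgroupOf R) := by
  obtain ⟨X, hXfin, hXgen, hhyp⟩ := hG
  have hgen := hXgen.image_retraction ρ hρ hA
  have hconn := cayleyGraph_connected hXgen
  have hconnR := cayleyGraph_connected hgen
  obtain ⟨C, hC⟩ := (hXfin.image fun x => (relCayleyGraph G A X).dist 1 (ρ x)).bddAbove
  refine ⟨ρ '' X, hXfin.image ρ, hgen, hhyp.of_dist_le hconn Subtype.val (max C 1)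
    (fun r s => cayleyGraph_dist_map_le_of_adj hconn R.subtype ?_) fun r s => ?_⟩
  · rintro _ (⟨x, hx, rfl⟩ | ht)
    · exact (hC ⟨x, hx, rfl⟩).trans (le_max_left _ _)
    · obtain ⟨i, hi⟩ := Set.mem_iUnion.1 ht
      refine (cayleyGraph_dist_le_one (.inr (Set.mem_iUnion.2 ⟨i, ?_⟩))).trans (le_max_right _ _)
      simpa using Subgroup.mem_subgroupOf.1 hi
  · have hρR (r : R) : ρ r = r := Subtype.ext (hρ r r.2)
    have := cayleyGraph_dist_map_le hconn hconnR ρ (mapsTo_retraction ρ hρ hA X) r s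
    rwa [hρR, hρR] at this
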